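/- Weak duality holds: for every primal-feasible tuple (Θ₁,…,Θ_T) (each Θ_t symmetric with Θ_t − ε·I_p positive semidefinite) and every dual-feasible triple (W,Y,Z) (satisfying the dual feasibility constraints), one has f(Θ₁,…,Θ_T) ≥ g(W,Y,Z). -/

import Mathlib

/-!
For each `t` the dual slack `Mₜ = Zₜ₊₁ - Zₜ + Wₜ - Yₜ` and `Θₜ - εI` are both positive
semidefinite, so `ε tr Mₜ ≤ ⟨Mₜ, Θₜ⟩`. Splitting `⟨Mₜ, Θₜ⟩`, the `W`-part is absorbed by the loss
through Young's inequality `⟨W, Θ - S⟩ ≤ (T/2)‖W‖² + ‖S - Θ‖²/(2T)` with `S = XXᵀ`; the `Y`-part by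
the `ℓ₁` penalty, since `Y` vanishes on the diagonal and is bounded entrywise by `λ₁ξ₁`; and the
`Z`-part, after summation by parts with `Z₁ = Z_{T+1} = 0`, becomes `∑ ⟨Zₜ, Θₜ₋₁ - Θₜ⟩`, which
Cauchy–Schwarz bounds by the fused penalty.
-/

open Matrix Finset

/-- Frobenius norm of a real `p × p` matrix. -/
noncomputable def frob {p : ℕ} (A : Matrix (Fin p) (Fin p) ℝ) : ℝ :=
  Real.sqrt (∑ u, ∑ v, (A u v) ^ 2)

/-- The primal objective `f`, with time indices `t = 1, …, T`. -/
noncomputable def primalF (p T : ℕ) (X : ℕ → Fin p → ℝ) (lam1 lam2 : ℝ)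
    (ξ1 : Fin p → Fin p → ℕ → ℝ) (ξ2 : ℕ → ℝ)
    (Θ : ℕ → Matrix (Fin p) (Fin p) ℝ) : ℝ :=
  ∑ t ∈ Finset.Icc 1 T, (1 / (2 * (T : ℝ))) *
      (frob (Matrix.vecMulVec (X t) (X t) - Θ t)) ^ 2
    + lam1 * ∑ t ∈ Finset.Icc 1 T, ∑ u, ∑ v,
        (if u ≠ v then ξ1 u v t * |Θ t u v| else 0)
    + lam2 * ∑ t ∈ Finset.Icc 2 T, ξ2 t * frob (Θ t - Θ (t - 1))

/-- The dual objective `g` (with the conventions `Z 1 = 0`, `Z (T+1) = 0` imposed on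
the dual variables). -/
noncomputable def dualG (p T : ℕ) (X : ℕ → Fin p → ℝ) (ε : ℝ)
    (W Y Z : ℕ → Matrix (Fin p) (Fin p) ℝ) : ℝ :=
  ∑ t ∈ Finset.Icc 1 T,
    (-(T : ℝ) / 2 * (frob (W t)) ^ 2
      - ((W t)ᵀ * Matrix.vecMulVec (X t) (X t)).trace
      + ε * (Z (t + 1) - Z t + W t - Y t).trace)

/-- Primal feasibility: each `Θ t` is symmetric with `Θ t - ε • I` positive semidefinite. -/
def PrimalFeasible (p T : ℕ) (ε : ℝ) (Θ : ℕ → Matrix (Fin p) (Fin p) ℝ) : Prop :=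
  ∀ t ∈ Finset.Icc 1 T, (Θ t).IsSymm ∧ (Θ t - ε • 1).PosSemidef

/-- Dual feasibility of the triple `(W, Y, Z)`. -/
def DualFeasible (p T : ℕ) (lam1 lam2 : ℝ)
    (ξ1 : Fin p → Fin p → ℕ → ℝ) (ξ2 : ℕ → ℝ)
    (W Y Z : ℕ → Matrix (Fin p) (Fin p) ℝ) : Prop :=
  Z 1 = 0 ∧ Z (T + 1) = 0 ∧
  (∀ t ∈ Finset.Icc 1 T, (W t).IsSymm) ∧
  (∀ t ∈ Finset.Icc 1 T, (Y t).IsSymm ∧ ∀ u : Fin p, Y t u u = 0) ∧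
  (∀ t ∈ Finset.Icc 2 T, (Z t).IsSymm) ∧
  (∀ t ∈ Finset.Icc 1 T, (Z (t + 1) - Z t + W t - Y t).PosSemidef) ∧
  (∀ t ∈ Finset.Icc 2 T, frob (Z t) ≤ lam2 * ξ2 t) ∧
  (∀ t ∈ Finset.Icc 1 T, ∀ u v : Fin p, u ≠ v → |Y t u v| ≤ lam1 * ξ1 u v t)

def frobInner {m n : Type*} [Fintype m] [Fintype n] (A B : Matrix m n ℝ) : ℝ :=
  (Aᵀ * B).trace

section FrobInner

variable {m n : Type*} [Fintype m] [Fintype n]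

lemma frobInner_eq_sum (A B : Matrix m n ℝ) : frobInner A B = ∑ u, ∑ v, A u v * B u v := by
  simp only [frobInner, trace, Matrix.diag, mul_apply, transpose_apply]
  exact Finset.sum_comm

lemma frobInner_zero_left (B : Matrix m n ℝ) : frobInner 0 B = 0 := by
  simp [frobInner]

lemma frobInner_add_left (A B C : Matrix m n ℝ) :
    frobInner (A + B) C = frobInner A C + frobInner B C := by
  simp [frobInner, Matrix.add_mul, trace_add]

lemma frobInner_sub_left (A B C : Matrix m n ℝ) :
    frobInner (A - B) C = frobInner A C - frobInner B C := by
  simp [frobInner, Matrix.sub_mul, trace_sub]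

lemma frobInner_sub_right (A B C : Matrix m n ℝ) :
    frobInner A (B - C) = frobInner A B - frobInner A C := by
  simp [frobInner, Matrix.mul_sub, trace_sub]

lemma frobInner_smul_one [DecidableEq n] (A : Matrix n n ℝ) (c : ℝ) :
    frobInner A (c • 1) = c * A.trace := by
  simp [frobInner, trace_transpose]

lemma sum_Icc_frobInner_by_parts {T : ℕ} (hT : 1 ≤ T) (Z Θ : ℕ → Matrix m n ℝ) :
    ∑ t ∈ Icc 1 T, frobInner (Z (t + 1) - Z t) (Θ t)
      = frobInner (Z (T + 1)) (Θ T) - frobInner (Z 1) (Θ 1)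
        + ∑ t ∈ Icc 2 T, frobInner (Z t) (Θ (t - 1) - Θ t) := by
  induction T, hT using Nat.le_induction with
  | base => simp [frobInner_sub_left]
  | succ T hT ih =>
    rw [sum_Icc_succ_top (by omega), sum_Icc_succ_top (by omega), ih, Nat.add_sub_cancel]
    simp only [frobInner_sub_left, frobInner_sub_right]
    ring

lemma neg_frobInner_le_weighted_offDiag [DecidableEq n] {Y : Matrix n n ℝ} {lam : ℝ}
    {ξ : n → n → ℝ} (hdiag : ∀ u, Y u u = 0) (hY : ∀ u v, u ≠ v → |Y u v| ≤ lam * ξ u v)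
    (Θ : Matrix n n ℝ) :
    -frobInner Y Θ ≤ lam * ∑ u, ∑ v, (if u ≠ v then ξ u v * |Θ u v| else 0) := by
  simp only [frobInner_eq_sum, ← sum_neg_distrib, mul_sum]
  refine sum_le_sum fun u _ => sum_le_sum fun v _ => ?_
  split_ifs with huv
  · calc -(Y u v * Θ u v) ≤ |Y u v| * |Θ u v| := abs_mul (Y u v) (Θ u v) ▸ neg_le_abs _
      _ ≤ lam * ξ u v * |Θ u v| := by gcongr; exact hY u v huv
      _ = lam * (ξ u v * |Θ u v|) := mul_assoc _ _ _
  · simp [not_not.mp huv, hdiag]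

lemma Matrix.PosSemidef.trace_mul_nonneg {M N : Matrix n n ℝ} (hM : M.PosSemidef)
    (hN : N.PosSemidef) : 0 ≤ (M * N).trace := by
  classical
  obtain ⟨B, rfl⟩ : ∃ B : Matrix n n ℝ, N = Bᴴ * B := by
    open scoped MatrixOrder in exact CStarAlgebra.nonneg_iff_eq_star_mul_self.mp hN.nonneg
  rw [trace_mul_comm, Matrix.mul_assoc, trace_mul_comm]
  exact (hM.mul_mul_conjTranspose_same B).trace_nonneg

lemma Matrix.PosSemidef.frobInner_nonneg {M N : Matrix n n ℝ} (hM : M.PosSemidef)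
    (hN : N.PosSemidef) : 0 ≤ frobInner M N := by
  rw [frobInner, ← conjTranspose_eq_transpose_of_trivial, hM.1.eq]
  exact hM.trace_mul_nonneg hN

end FrobInner

section Frob

variable {p : ℕ}

lemma frob_sub_comm (A B : Matrix (Fin p) (Fin p) ℝ) : frob (A - B) = frob (B - A) := by
  simp only [frob, Matrix.sub_apply, sub_sq_comm (A _ _)]

lemma frobInner_le_frob_mul_frob (A B : Matrix (Fin p) (Fin p) ℝ) :
    frobInner A B ≤ frob A * frob B := by
  simpa only [frobInner_eq_sum, frob, Fintype.sum_prod_type] using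
    Real.sum_mul_le_sqrt_mul_sqrt univ (fun x : Fin p × Fin p => A x.1 x.2) (fun x => B x.1 x.2)

lemma frobInner_le_young {c : ℝ} (hc : 0 < c) (A B : Matrix (Fin p) (Fin p) ℝ) :
    frobInner A B ≤ c / 2 * frob A ^ 2 + 1 / (2 * c) * frob B ^ 2 := by
  refine (frobInner_le_frob_mul_frob A B).trans ?_
  have hsq := sq_nonneg (c * frob A - frob B)
  field_simp
  nlinarith

lemma frobInner_le_mul_frob_of_frob_le {Z : Matrix (Fin p) (Fin p) ℝ} {b : ℝ} (hZ : frob Z ≤ b)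
    (A : Matrix (Fin p) (Fin p) ℝ) : frobInner Z A ≤ b * frob A :=
  (frobInner_le_frob_mul_frob Z A).trans (by gcongr; exact Real.sqrt_nonneg _)

end Frob

lemma dualG_summand_le {p : ℕ} {c ε lam : ℝ} (hc : 0 < c) {S Θ W Y D : Matrix (Fin p) (Fin p) ℝ}
    {ξ : Fin p → Fin p → ℝ} (hΘ : (Θ - ε • 1).PosSemidef) (hM : (D + W - Y).PosSemidef)
    (hdiag : ∀ u, Y u u = 0) (hY : ∀ u v, u ≠ v → |Y u v| ≤ lam * ξ u v) :
    -c / 2 * frob W ^ 2 - (Wᵀ * S).trace + ε * (D + W - Y).trace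
      ≤ 1 / (2 * c) * frob (S - Θ) ^ 2
        + lam * ∑ u, ∑ v, (if u ≠ v then ξ u v * |Θ u v| else 0) + frobInner D Θ := by
  have hslack : ε * (D + W - Y).trace ≤ frobInner D Θ + frobInner W Θ - frobInner Y Θ := by
    have := hM.frobInner_nonneg hΘ
    rwa [frobInner_sub_right, frobInner_smul_one, sub_nonneg, frobInner_sub_left,
      frobInner_add_left] at this
  have hfit := frobInner_le_young hc W (Θ - S)
  rw [frobInner_sub_right, frob_sub_comm] at hfit
  have hpen := neg_frobInner_le_weighted_offDiag hdiag hY Θ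
  rw [show (Wᵀ * S).trace = frobInner W S from rfl]
  linarith

theorem stmt10_general (p T : ℕ) (hT : 1 ≤ T)
    (X : ℕ → Fin p → ℝ) (ε lam1 lam2 : ℝ)
    (ξ1 : Fin p → Fin p → ℕ → ℝ)
    (ξ2 : ℕ → ℝ)
    (Θ : ℕ → Matrix (Fin p) (Fin p) ℝ)
    (hΘ : PrimalFeasible p T ε Θ)
    (W Y Z : ℕ → Matrix (Fin p) (Fin p) ℝ)
    (hWYZ : DualFeasible p T lam1 lam2 ξ1 ξ2 W Y Z) :
    dualG p T X ε W Y Z ≤ primalF p T X lam1 lam2 ξ1 ξ2 Θ := by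
  obtain ⟨hZ1, hZT1, -, hYdiag, -, hM, hZ, hY⟩ := hWYZ
  have hTpos : (0 : ℝ) < T := by exact_mod_cast hT
  have hfused : ∀ t ∈ Icc 2 T,
      frobInner (Z t) (Θ (t - 1) - Θ t) ≤ lam2 * (ξ2 t * frob (Θ t - Θ (t - 1))) := by
    intro t ht
    rw [← mul_assoc, ← frob_sub_comm]
    exact frobInner_le_mul_frob_of_frob_le (hZ t ht) _
  calc dualG p T X ε W Y Z
      ≤ ∑ t ∈ Icc 1 T, (1 / (2 * (T : ℝ)) * frob (vecMulVec (X t) (X t) - Θ t) ^ 2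
          + lam1 * ∑ u, ∑ v, (if u ≠ v then ξ1 u v t * |Θ t u v| else 0)
          + frobInner (Z (t + 1) - Z t) (Θ t)) :=
        sum_le_sum fun t ht =>
          dualG_summand_le hTpos (hΘ t ht).2 (hM t ht) (hYdiag t ht).2 (hY t ht)
    _ = ∑ t ∈ Icc 1 T, (1 / (2 * (T : ℝ)) * frob (vecMulVec (X t) (X t) - Θ t) ^ 2
          + lam1 * ∑ u, ∑ v, (if u ≠ v then ξ1 u v t * |Θ t u v| else 0))
        + ∑ t ∈ Icc 2 T, frobInner (Z t) (Θ (t - 1) - Θ t) := by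
        rw [sum_add_distrib, sum_Icc_frobInner_by_parts hT, hZ1, hZT1]
        simp only [frobInner_zero_left, sub_zero, zero_add]
    _ ≤ primalF p T X lam1 lam2 ξ1 ξ2 Θ := by
        rw [primalF, mul_sum, mul_sum, ← sum_add_distrib]
        exact add_le_add_right (sum_le_sum hfused) _

/-- weak duality — the dual objective at any dual-feasible triple is at
most the primal objective at any primal-feasible tuple. -/
theorem stmt10 (p T : ℕ) (hp : 1 ≤ p) (hT : 1 ≤ T)
    (X : ℕ → Fin p → ℝ) (ε lam1 lam2 : ℝ)
    (hε : 0 < ε) (hlam1 : 0 ≤ lam1) (hlam2 : 0 < lam2)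
    (ξ1 : Fin p → Fin p → ℕ → ℝ)
    (hξ1 : ∀ u v : Fin p, u ≠ v → ∀ t ∈ Finset.Icc 1 T, 0 ≤ ξ1 u v t)
    (ξ2 : ℕ → ℝ) (hξ2 : ∀ t ∈ Finset.Icc 2 T, 0 < ξ2 t)
    (Θ : ℕ → Matrix (Fin p) (Fin p) ℝ)
    (hΘ : PrimalFeasible p T ε Θ)
    (W Y Z : ℕ → Matrix (Fin p) (Fin p) ℝ)
    (hWYZ : DualFeasible p T lam1 lam2 ξ1 ξ2 W Y Z) :
    dualG p T X ε W Y Z ≤ primalF p T X lam1 lam2 ξ1 ξ2 Θ :=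
  stmt10_general p T hT X ε lam1 lam2 ξ1 ξ2 Θ hΘ W Y Z hWYZ
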